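/- (Proposition 3, safety under measurement and actuation uncertainties, higher relative degree.) Let x be a closed-loop trajectory of the sampled-data control-affine system, where h has relative degree r. Let ε_x, ε_u > 0. Suppose that for each k ∈ ℕ there exist a state estimate x̂_k ∈ ℝⁿ with ‖x(t_k) − x̂_k‖₂ ≤ ε_x, a set Ŝ_k ⊆ ℝⁿ (an over-approximation of the reachable tube emanating from the ball of radius ε_x around x̂_k) with x(t) ∈ Ŝ_k for all t ∈ [t_k, t_{k+1}], a real margin φ̂_k with ξ(x′, u) − ξ(x̂_k, u) ≥ φ̂_k for every x′ ∈ Ŝ_k and every u ∈ U, and a desired input u^d_k such that every u ∈ ℝᵐ with ‖u − u^d_k‖₂ ≤ ε_u satisfies u ∈ U and ξ(x̂_k, u) + φ̂_k ≥ 0, i.e. L_f^r h(x̂_k) + L_g L_f^{r−1} h(x̂_k) u + aᵀη(x̂_k) + φ̂_k ≥ 0. Suppose the actually applied input satisfies ‖u_k − u^d_k‖₂ ≤ ε_u for every k, and that s_j(x) ≥ 0 for every j = 0, …, r−1 and every x ∈ ℝⁿ with ‖x − x̂_0‖₂ ≤ ε_x. Then h(x(t)) ≥ 0 for all t ≥ 0.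 -/

import Mathlib

open Set Filter

noncomputable section

/-- `ℝⁿ` as a Euclidean space. -/
abbrev E (n : ℕ) : Type := EuclideanSpace ℝ (Fin n)

/-- Iterated Lie derivative along `f`: `L_f^0 h = h`, `L_f^{k+1} h (x) = ∇(L_f^k h)(x)·f(x)`. -/
noncomputable def lieIter {n : ℕ} (f : E n → E n) (h : E n → ℝ) : ℕ → E n → ℝ
  | 0 => h
  | k + 1 => fun p => fderiv ℝ (lieIter f h k) p (f p)

/-- The cascaded functions `s_0 = h`, `s_k = L_f s_{k-1} + λ_k s_{k-1}` (using `lam k` as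
`λ_k`). -/
noncomputable def cascade {n : ℕ} (f : E n → E n) (h : E n → ℝ) (lam : ℕ → ℝ) :
    ℕ → E n → ℝ
  | 0 => h
  | k + 1 => fun p =>
      fderiv ℝ (cascade f h lam k) p (f p) + lam (k + 1) * cascade f h lam k p

/-- `esym lam k j` is the `j`-th elementary symmetric polynomial `e_j(λ_1, …, λ_k)`
(so `esym lam k 0 = 1`). -/
noncomputable def esym (lam : ℕ → ℝ) (k j : ℕ) : ℝ :=
  ∑ S ∈ (Finset.Icc 1 k).powersetCard j, ∏ i ∈ S, lam i

/-- The higher-order CBF expression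
`ξ(x,u) = L_f^r h(x) + L_g L_f^{r-1} h(x) u + aᵀη(x)`, where `a_i = e_i(λ_1, …, λ_r)` and
`aᵀη(x) = Σ_{i=0}^{r-1} e_{r-i}(λ_1, …, λ_r) · L_f^i h(x)`. -/
noncomputable def xiR {n m : ℕ} (f : E n → E n) (g : E n → E m →L[ℝ] E n)
    (h : E n → ℝ) (lam : ℕ → ℝ) (r : ℕ) (p : E n) (v : E m) : ℝ :=
  lieIter f h r p + fderiv ℝ (lieIter f h (r - 1)) p (g p v)
    + ∑ i ∈ Finset.range r, esym lam r (r - i) * lieIter f h i p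


/-! Expanding the recursion gives `s_k = ∑_{i ≤ k} e_{k-i}(λ_1, …, λ_k) L_f^i h`; hence, by the
relative degree assumption, along any trajectory `d/dt s_j(x) = s_{j+1}(x) - λ_{j+1} s_j(x)` for
`j + 1 < r`, while `d/dt s_{r-1}(x) = ξ(x, u) - λ_r s_{r-1}(x)`. The margin `φ̂_k` and the
actuation bound give `ξ(x(t), u_k) ≥ 0` on every sampling interval, and a comparison argument
(`e^{λ t} s_j(x(t))` is nondecreasing as soon as `s_{j+1}(x(t)) ≥ 0`) carries nonnegativity from
`s_{r-1}` down to `s_0 = h`, starting from `s_j(x(0)) ≥ 0`, which holds because `x(0)` lies within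
`ε_x` of `x̂_0`. -/

lemma fderiv_sum_const_mul_apply {F ι : Type*} [NormedAddCommGroup F] [NormedSpace ℝ F]
    {s : Finset ι} {c : ι → ℝ} {φ : ι → F → ℝ} {p : F}
    (hφ : ∀ i ∈ s, DifferentiableAt ℝ (φ i) p) (w : F) :
    fderiv ℝ (fun q => ∑ i ∈ s, c i * φ i q) p w = ∑ i ∈ s, c i * fderiv ℝ (φ i) p w := by
  rw [fderiv_fun_sum fun i hi => (hφ i hi).const_mul _, sum_apply]
  exact Finset.sum_congr rfl fun i hi => by
    rw [fderiv_const_mul (hφ i hi), smul_apply, smul_eq_mul]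

lemma monotoneOn_exp_mul_of_neg_mul_le_deriv {y y' : ℝ → ℝ} {a b c : ℝ}
    (hy : ContinuousOn y (Icc a b)) (hder : ∀ s ∈ Ioo a b, HasDerivAt y (y' s) s)
    (hle : ∀ s ∈ Ioo a b, -c * y s ≤ y' s) :
    MonotoneOn (fun s => Real.exp (c * s) * y s) (Icc a b) := by
  refine monotoneOn_of_hasDerivWithinAt_nonneg (convex_Icc a b)
    ((Real.continuous_exp.comp (continuous_const_mul c)).continuousOn.mul hy) (fun s hs => ?_)
    (fun s hs => ?_) (f' := fun s => Real.exp (c * s) * c * y s + Real.exp (c * s) * y' s)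
  · rw [interior_Icc] at hs ⊢
    exact ((((hasDerivAt_id s).const_mul c).exp.congr_deriv (by simp)).mul
      (hder s hs)).hasDerivWithinAt
  · rw [interior_Icc] at hs
    have := mul_le_mul_of_nonneg_left (hle s hs) (Real.exp_pos (c * s)).le
    linarith

lemma monotoneOn_Icc_zero_of_monotoneOn_Icc_succ {z : ℝ → ℝ} {t : ℕ → ℝ} (ht : Monotone t)
    (hz : ∀ k, MonotoneOn z (Icc (t k) (t (k + 1)))) (K : ℕ) :
    MonotoneOn z (Icc (t 0) (t K)) := by
  induction K with
  | zero => simp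
  | succ K ih =>
    rw [← Icc_union_Icc_eq_Icc (ht (Nat.zero_le K)) (ht K.le_succ)]
    exact ih.union_right (hz K) (isGreatest_Icc (ht (Nat.zero_le K)))
      (isLeast_Icc (ht K.le_succ))

lemma nonneg_of_neg_mul_le_deriv_of_sampled {t : ℕ → ℝ} (ht : Monotone t)
    (httop : Tendsto t atTop atTop) {y : ℝ → ℝ} {y' : ℕ → ℝ → ℝ} {c : ℝ}
    (hy : ContinuousOn y (Ici (t 0)))
    (hder : ∀ k, ∀ s ∈ Ioo (t k) (t (k + 1)), HasDerivAt y (y' k s) s)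
    (hle : ∀ k, ∀ s ∈ Ioo (t k) (t (k + 1)), -c * y s ≤ y' k s)
    (hy0 : 0 ≤ y (t 0)) {s : ℝ} (hs : t 0 ≤ s) : 0 ≤ y s := by
  obtain ⟨K, hK⟩ := (httop.eventually_ge_atTop s).exists
  have hmono := monotoneOn_Icc_zero_of_monotoneOn_Icc_succ ht (fun k =>
    monotoneOn_exp_mul_of_neg_mul_le_deriv
      (hy.mono fun τ hτ => (ht (Nat.zero_le k)).trans hτ.1) (hder k) (hle k)) K
  have hexp0 : 0 ≤ Real.exp (c * t 0) * y (t 0) := mul_nonneg (Real.exp_pos _).le hy0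
  exact nonneg_of_mul_nonneg_right
    (hexp0.trans (hmono (left_mem_Icc.2 (hs.trans hK)) ⟨hs, hK⟩ hs)) (Real.exp_pos _)

lemma esym_zero (lam : ℕ → ℝ) (k : ℕ) : esym lam k 0 = 1 := by
  simp [esym]

lemma esym_eq_zero_of_lt (lam : ℕ → ℝ) {k j : ℕ} (h : k < j) : esym lam k j = 0 := by
  rw [esym, Finset.powersetCard_eq_empty.2 (by simpa using h), Finset.sum_empty]

lemma esym_succ_succ (lam : ℕ → ℝ) (k j : ℕ) :
    esym lam (k + 1) (j + 1) = esym lam k (j + 1) + lam (k + 1) * esym lam k j := by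
  have hnot : k + 1 ∉ Finset.Icc 1 k := by simp
  have hnot_mem : ∀ S ∈ (Finset.Icc 1 k).powersetCard j, k + 1 ∉ S :=
    fun S hS hk => hnot ((Finset.mem_powersetCard.1 hS).1 hk)
  have hdisj : Disjoint ((Finset.Icc 1 k).powersetCard (j + 1))
      (((Finset.Icc 1 k).powersetCard j).image (insert (k + 1))) := by
    refine Finset.disjoint_left.2 fun S hS hS' => ?_
    obtain ⟨T, -, rfl⟩ := Finset.mem_image.1 hS'
    exact hnot ((Finset.mem_powersetCard.1 hS).1 (Finset.mem_insert_self _ _))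
  have hinj : Set.InjOn (insert (k + 1) : Finset ℕ → Finset ℕ)
      ((Finset.Icc 1 k).powersetCard j : Set (Finset ℕ)) := by
    intro S hS T hT hST
    rw [← Finset.erase_insert (hnot_mem S hS), ← Finset.erase_insert (hnot_mem T hT), hST]
  rw [esym, ← Finset.insert_Icc_right_eq_Icc_add_one (by omega),
    Finset.powersetCard_succ_insert hnot, Finset.sum_union hdisj, Finset.sum_image hinj, esym,
    esym, Finset.mul_sum]
  congr 1
  exact Finset.sum_congr rfl fun S hS => Finset.prod_insert (hnot_mem S hS)

section LieDerivatives

variable {n m r : ℕ} {f : E n → E n} {g : E n → E m →L[ℝ] E n} {h : E n → ℝ} {lam : ℕ → ℝ}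

lemma contDiff_lieIter (hf : ContDiff ℝ (r - 1 : ℕ) f) (hh : ContDiff ℝ (r : ℕ) h) {i : ℕ}
    (hi : i < r) : ContDiff ℝ (r - i : ℕ) (lieIter f h i) := by
  induction i with
  | zero => simpa [lieIter] using hh
  | succ i ih =>
    have hfderiv : ContDiff ℝ (r - (i + 1) : ℕ) (fderiv ℝ (lieIter f h i)) :=
      (ih (by omega)).fderiv_right (by exact_mod_cast (by omega : r - (i + 1) + 1 ≤ r - i))
    exact hfderiv.clm_apply (hf.of_le (by exact_mod_cast (by omega : r - (i + 1) ≤ r - 1)))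

lemma differentiable_lieIter (hf : ContDiff ℝ (r - 1 : ℕ) f) (hh : ContDiff ℝ (r : ℕ) h)
    {i : ℕ} (hi : i < r) : Differentiable ℝ (lieIter f h i) :=
  (contDiff_lieIter hf hh hi).differentiable (Nat.cast_ne_zero.2 (by omega))

lemma cascade_eq_sum (hf : ContDiff ℝ (r - 1 : ℕ) f) (hh : ContDiff ℝ (r : ℕ) h) {k : ℕ}
    (hk : k ≤ r) :
    cascade f h lam k =
      fun p => ∑ i ∈ Finset.range (k + 1), esym lam k (k - i) * lieIter f h i p := by
  induction k with
  | zero => funext p; simp [cascade, lieIter, esym_zero]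
  | succ k ih =>
    funext p
    have hderiv : fderiv ℝ (cascade f h lam k) p (f p)
        = ∑ i ∈ Finset.range (k + 1), esym lam k (k - i) * lieIter f h (i + 1) p := by
      rw [ih (by omega), fderiv_sum_const_mul_apply fun i hi =>
        (differentiable_lieIter hf hh ((Finset.mem_range.1 hi).trans_le hk)).differentiableAt]
      rfl
    -- Pascal's rule for `esym` splits the new coefficients into a shifted copy of the old sum
    -- (which is `L_f s_k`) and `λ_{k+1}` times the old sum.
    have hpascal : ∀ i ∈ Finset.range (k + 1),
        esym lam (k + 1) (k + 1 - i) * lieIter f h i p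
          = esym lam k (k + 1 - i) * lieIter f h i p
            + lam (k + 1) * (esym lam k (k - i) * lieIter f h i p) := fun i hi => by
      rw [show k + 1 - i = k - i + 1 by simp at hi; omega, esym_succ_succ]
      ring
    have hshift : ∑ i ∈ Finset.range (k + 1), esym lam k (k + 1 - i) * lieIter f h i p
        = ∑ i ∈ Finset.range k, esym lam k (k - i) * lieIter f h (i + 1) p := by
      rw [Finset.sum_range_succ', esym_eq_zero_of_lt lam (by omega), zero_mul, add_zero]
      exact Finset.sum_congr rfl fun i _ => by rw [Nat.add_sub_add_right]
    show fderiv ℝ (cascade f h lam k) p (f p) + lam (k + 1) * cascade f h lam k p = _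
    rw [hderiv, ih (by omega), Finset.sum_range_succ _ (k + 1), Finset.sum_congr rfl hpascal,
      Finset.sum_add_distrib, ← Finset.mul_sum, hshift, Finset.sum_range_succ _ k]
    simp only [tsub_self, esym_zero, one_mul]
    ring

lemma differentiable_cascade (hf : ContDiff ℝ (r - 1 : ℕ) f) (hh : ContDiff ℝ (r : ℕ) h)
    {k : ℕ} (hk : k < r) : Differentiable ℝ (cascade f h lam k) := by
  rw [cascade_eq_sum hf hh hk.le]
  exact Differentiable.fun_sum fun i hi =>
    (differentiable_lieIter hf hh ((Finset.mem_range.1 hi).trans_le hk)).const_mul _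

lemma fderiv_cascade_apply_eq_fderiv_lieIter (hf : ContDiff ℝ (r - 1 : ℕ) f)
    (hh : ContDiff ℝ (r : ℕ) h)
    (hreldeg : ∀ k, k + 2 ≤ r → ∀ p : E n, ∀ v : E m, fderiv ℝ (lieIter f h k) p (g p v) = 0)
    {k : ℕ} (hk : k < r) (p : E n) (v : E m) :
    fderiv ℝ (cascade f h lam k) p (g p v) = fderiv ℝ (lieIter f h k) p (g p v) := by
  rw [cascade_eq_sum hf hh hk.le, fderiv_sum_const_mul_apply fun i hi =>
      (differentiable_lieIter hf hh ((Finset.mem_range.1 hi).trans_le hk)).differentiableAt,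
    Finset.sum_range_succ, Finset.sum_eq_zero fun i hi => ?_]
  · simp [esym_zero]
  · rw [hreldeg i (by simp at hi; omega) p v, mul_zero]

lemma xiR_eq_cascade_add (hf : ContDiff ℝ (r - 1 : ℕ) f) (hh : ContDiff ℝ (r : ℕ) h)
    (p : E n) (v : E m) :
    xiR f g h lam r p v = cascade f h lam r p + fderiv ℝ (lieIter f h (r - 1)) p (g p v) := by
  simp only [xiR, cascade_eq_sum hf hh le_rfl, Finset.sum_range_succ _ r, Nat.sub_self,
    esym_zero]
  ring

lemma hasDerivAt_cascade_comp (hf : ContDiff ℝ (r - 1 : ℕ) f) (hh : ContDiff ℝ (r : ℕ) h)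
    (hreldeg : ∀ k, k + 2 ≤ r → ∀ p : E n, ∀ v : E m, fderiv ℝ (lieIter f h k) p (g p v) = 0)
    {j : ℕ} (hj : j < r) {x : ℝ → E n} {v : E m} {s : ℝ}
    (hx : HasDerivAt x (f (x s) + g (x s) v) s) :
    HasDerivAt (fun τ => cascade f h lam j (x τ))
      (cascade f h lam (j + 1) (x s) - lam (j + 1) * cascade f h lam j (x s)
        + fderiv ℝ (lieIter f h j) (x s) (g (x s) v)) s := by
  refine (differentiable_cascade hf hh hj).differentiableAt.hasFDerivAt.comp_hasDerivAt s hx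
    |>.congr_deriv ?_
  rw [map_add, fderiv_cascade_apply_eq_fderiv_lieIter hf hh hreldeg hj]
  simp only [cascade]
  ring

lemma cascade_comp_nonneg (hf : ContDiff ℝ (r - 1 : ℕ) f) (hh : ContDiff ℝ (r : ℕ) h)
    (hreldeg : ∀ k, k + 2 ≤ r → ∀ p : E n, ∀ v : E m, fderiv ℝ (lieIter f h k) p (g p v) = 0)
    {j : ℕ} (hj : j < r) {t : ℕ → ℝ} (ht : Monotone t) (httop : Tendsto t atTop atTop)
    {u : ℕ → E m} {x : ℝ → E n} (hxc : ContinuousOn x (Ici (t 0)))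
    (hode : ∀ k, ∀ s ∈ Ioo (t k) (t (k + 1)), HasDerivAt x (f (x s) + g (x s) (u k)) s)
    (hx0 : 0 ≤ cascade f h lam j (x (t 0)))
    (hforce : ∀ k, ∀ s ∈ Ioo (t k) (t (k + 1)),
      0 ≤ cascade f h lam (j + 1) (x s) + fderiv ℝ (lieIter f h j) (x s) (g (x s) (u k)))
    (s : ℝ) (hs : t 0 ≤ s) : 0 ≤ cascade f h lam j (x s) :=
  nonneg_of_neg_mul_le_deriv_of_sampled ht httop (y := fun τ => cascade f h lam j (x τ))
    ((differentiable_cascade hf hh hj).continuous.comp_continuousOn hxc)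
    (fun k s hs => hasDerivAt_cascade_comp hf hh hreldeg hj (hode k s hs))
    (fun k s hs => by linarith [hforce k s hs]) hx0 hs

end LieDerivatives

theorem stmt_9_general {n m : ℕ} (r : ℕ) (hr : 2 ≤ r)
    (f : E n → E n) (hf : ContDiff ℝ (r - 1 : ℕ) f)
    (g : E n → E m →L[ℝ] E n)
    (U : Set (E m))
    (h : E n → ℝ) (hh : ContDiff ℝ (r : ℕ) h)
    (lam : ℕ → ℝ)
    (hreldeg : ∀ k, k + 2 ≤ r → ∀ p : E n, ∀ v : E m,
      fderiv ℝ (lieIter f h k) p (g p v) = 0)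
    (t : ℕ → ℝ) (ht0 : t 0 = 0) (htmono : StrictMono t)
    (httop : Tendsto t atTop atTop)
    (u : ℕ → E m)
    (x : ℝ → E n) (hxc : ContinuousOn x (Ici (0 : ℝ)))
    (hode : ∀ k, ∀ s ∈ Ioo (t k) (t (k + 1)),
      HasDerivAt x (f (x s) + g (x s) (u k)) s)
    (εx εu : ℝ)
    (xhat : ℕ → E n) (hmeas : ∀ k, ‖x (t k) - xhat k‖ ≤ εx)
    (Shat : ℕ → Set (E n))
    (hreach : ∀ k, ∀ s ∈ Icc (t k) (t (k + 1)), x s ∈ Shat k)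
    (φhat : ℕ → ℝ)
    (hmargin : ∀ k, ∀ x' ∈ Shat k, ∀ v ∈ U,
      φhat k ≤ xiR f g h lam r x' v - xiR f g h lam r (xhat k) v)
    (ud : ℕ → E m)
    (hdes : ∀ k, ∀ v : E m, ‖v - ud k‖ ≤ εu →
      v ∈ U ∧ 0 ≤ xiR f g h lam r (xhat k) v + φhat k)
    (hact : ∀ k, ‖u k - ud k‖ ≤ εu)
    (hinit : ∀ j < r, ∀ p : E n, ‖p - xhat 0‖ ≤ εx → 0 ≤ cascade f h lam j p) :
    ∀ s, 0 ≤ s → 0 ≤ h (x s) := by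
  have hxi : ∀ k, ∀ s ∈ Ioo (t k) (t (k + 1)), 0 ≤ xiR f g h lam r (x s) (u k) := by
    intro k s hs
    obtain ⟨hU, hdes⟩ := hdes k (u k) (hact k)
    linarith [hmargin k (x s) (hreach k s (Ioo_subset_Icc_self hs)) (u k) hU]
  have hstep := fun j (hj : j < r) => cascade_comp_nonneg hf hh hreldeg hj htmono.monotone
    httop (by rwa [ht0]) hode (hinit j hj _ (hmeas 0))
  have hcascade : ∀ j ≤ r - 1, ∀ s, t 0 ≤ s → 0 ≤ cascade f h lam j (x s) := by
    intro j hj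
    induction hj using Nat.decreasingInduction with
    | self =>
      refine hstep (r - 1) (by omega) fun k s hs => ?_
      rw [Nat.sub_add_cancel (by omega), ← xiR_eq_cascade_add hf hh]
      exact hxi k s hs
    | of_succ j hjr ih =>
      refine hstep j (by omega) fun k s hs => ?_
      rw [hreldeg j (by omega), add_zero]
      exact ih s ((htmono.monotone (Nat.zero_le k)).trans hs.1.le)
  exact fun s hs => hcascade 0 (Nat.zero_le _) s (ht0 ▸ hs)

/-- Proposition 3 (safety under measurement and actuation uncertainties, higher relative
degree): with state estimates `xhat k` accurate to `ε_x`, reachable-tube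
over-approximations `Shat k`, margins `φhat k`, and desired inputs `ud k` such that every
input within `ε_u` of `ud k` lies in `U` and satisfies `ξ(x̂_k, ·) + φhat k ≥ 0`, the
actually applied inputs `u k` (within `ε_u` of `ud k`) keep `h(x(t)) ≥ 0` for all `t ≥ 0`,
provided `s_j ≥ 0` on the `ε_x`-ball around the initial estimate `xhat 0` for
`j = 0, …, r-1`. -/
theorem stmt_9 {n m : ℕ} (r : ℕ) (hr : 2 ≤ r)
    (f : E n → E n) (hfl : LocallyLipschitz f) (hf : ContDiff ℝ (r - 1 : ℕ) f)
    (g : E n → E m →L[ℝ] E n) (hgl : LocallyLipschitz g)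
    (U : Set (E m))
    (h : E n → ℝ) (hh : ContDiff ℝ (r : ℕ) h)
    (lam : ℕ → ℝ) (hlam : ∀ i, 1 ≤ i → i ≤ r → 0 < lam i)
    (hreldeg : ∀ k, k + 2 ≤ r → ∀ p : E n, ∀ v : E m,
      fderiv ℝ (lieIter f h k) p (g p v) = 0)
    (t : ℕ → ℝ) (ht0 : t 0 = 0) (htmono : StrictMono t)
    (httop : Tendsto t atTop atTop)
    (u : ℕ → E m)
    (x : ℝ → E n) (hxc : ContinuousOn x (Ici (0 : ℝ)))
    (hode : ∀ k, ∀ s ∈ Ioo (t k) (t (k + 1)),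
      HasDerivAt x (f (x s) + g (x s) (u k)) s)
    (εx εu : ℝ) (hεx : 0 < εx) (hεu : 0 < εu)
    (xhat : ℕ → E n) (hmeas : ∀ k, ‖x (t k) - xhat k‖ ≤ εx)
    (Shat : ℕ → Set (E n))
    (hreach : ∀ k, ∀ s ∈ Icc (t k) (t (k + 1)), x s ∈ Shat k)
    (φhat : ℕ → ℝ)
    (hmargin : ∀ k, ∀ x' ∈ Shat k, ∀ v ∈ U,
      φhat k ≤ xiR f g h lam r x' v - xiR f g h lam r (xhat k) v)
    (ud : ℕ → E m)
    (hdes : ∀ k, ∀ v : E m, ‖v - ud k‖ ≤ εu →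
      v ∈ U ∧ 0 ≤ xiR f g h lam r (xhat k) v + φhat k)
    (hact : ∀ k, ‖u k - ud k‖ ≤ εu)
    (hinit : ∀ j < r, ∀ p : E n, ‖p - xhat 0‖ ≤ εx → 0 ≤ cascade f h lam j p) :
    ∀ s, 0 ≤ s → 0 ≤ h (x s) :=
  stmt_9_general r hr f hf g U h hh lam hreldeg t ht0 htmono httop u x hxc hode εx εu xhat hmeas
    Shat hreach φhat hmargin ud hdes hact hinit
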